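/- Under a progressive wealth tax, the optimal risky share w* = w_neutral·(W + H_τ)/W with tax shield H_τ = R_j/(r_f - τ_j) > 0 strictly exceeds the proportional-tax benchmark w_neutral, and the relative distortion H_τ/W is strictly decreasing in W and vanishes as W → ∞. -/

import Mathlib

theorem lt_mul_one_add_div {a H W : ℝ} (ha : 0 < a) (hH : 0 < H) (hW : 0 < W) :
    a < a * (1 + H / W) :=
  lt_mul_of_one_lt_right ha (lt_add_of_pos_right 1 (div_pos hH hW))

theorem progressive_tax_shield_general
    (wn Rj r_f τj : ℝ) (hwn : wn > 0) (hR : Rj > 0) (hr : τj < r_f) :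
    (0 < Rj / (r_f - τj))
    ∧ (∀ W : ℝ, W > 0 → wn < wn * (1 + (Rj / (r_f - τj)) / W))
    ∧ (∀ W₁ W₂ : ℝ, 0 < W₁ → W₁ < W₂ →
        (Rj / (r_f - τj)) / W₂ < (Rj / (r_f - τj)) / W₁)
    ∧ Filter.Tendsto (fun W : ℝ => (Rj / (r_f - τj)) / W) Filter.atTop (nhds 0) := by
  have hH : 0 < Rj / (r_f - τj) := div_pos hR (sub_pos.mpr hr)
  refine ⟨hH, fun W hW => lt_mul_one_add_div hwn hH hW,
    fun W₁ W₂ h₁ h₁₂ => div_lt_div_of_pos_left hH h₁ h₁₂, ?_⟩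
  exact tendsto_const_nhds.div_atTop Filter.tendsto_id

/-- The progressive tax shield raises the risky share above the neutral benchmark;
the relative distortion is strictly decreasing and vanishes at infinity. -/
theorem progressive_tax_shield
    (wn Rj r_f τj : ℝ) (hwn : wn > 0) (hR : Rj > 0) (hτ : 0 ≤ τj) (hr : τj < r_f) :
    (0 < Rj / (r_f - τj))
    ∧ (∀ W : ℝ, W > 0 → wn < wn * (1 + (Rj / (r_f - τj)) / W))
    ∧ (∀ W₁ W₂ : ℝ, 0 < W₁ → W₁ < W₂ →
        (Rj / (r_f - τj)) / W₂ < (Rj / (r_f - τj)) / W₁)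
    ∧ Filter.Tendsto (fun W : ℝ => (Rj / (r_f - τj)) / W) Filter.atTop (nhds 0) :=
  progressive_tax_shield_general wn Rj r_f τj hwn hR hr
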